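/- Necessity of isotropy: let U ∈ ℝ^{3×3} be symmetric positive definite with eigenvalues λ₁, λ₂, λ₃. If the value F(U; f, g) = (fᵀUf + gᵀUg)/((fᵀUf)(gᵀUg) − (fᵀUg)²) is the same for all orthonormal pairs (f, g) in ℝ³, then λ₁ = λ₂ = λ₃, i.e., U = τ·I₃ for some τ > 0. -/

import Mathlib

/-!
The eigenvectors `vᵢ` of `U` are orthonormal and `U`-orthogonal, so
`F(U; vᵢ, vⱼ) = 1/λᵢ + 1/λⱼ` for `i ≠ j`. If `F` is constant, then `1/λᵢ + 1/λₖ = 1/λⱼ + 1/λₖ`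
for any third index `k`, so all eigenvalues agree and the spectral theorem gives `U = λ • 1`.
-/

open scoped Matrix

namespace Matrix

variable {n : Type*} [Fintype n]

/-- The paper's `F(U; f, g)`: the trace of the inverse of the compression
`!![fᵀUf, fᵀUg; fᵀUg, gᵀUg]` of a symmetric `U` to the plane spanned by `f, g`. -/
noncomputable def compressionInvTrace (U : Matrix n n ℝ) (f g : n → ℝ) : ℝ :=
  (f ⬝ᵥ U *ᵥ f + g ⬝ᵥ U *ᵥ g) / ((f ⬝ᵥ U *ᵥ f) * (g ⬝ᵥ U *ᵥ g) - (f ⬝ᵥ U *ᵥ g) ^ 2)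

namespace IsHermitian

variable [DecidableEq n]

lemma star_eigenvectorBasis_dotProduct {𝕜 : Type*} [RCLike 𝕜] {A : Matrix n n 𝕜}
    (hA : A.IsHermitian) (i j : n) :
    star ⇑(hA.eigenvectorBasis i) ⬝ᵥ ⇑(hA.eigenvectorBasis j) = if i = j then 1 else 0 := by
  rw [dotProduct_comm, ← EuclideanSpace.inner_eq_star_dotProduct,
    orthonormal_iff_ite.mp hA.eigenvectorBasis.orthonormal]

lemma star_eigenvectorBasis_dotProduct_mulVec {𝕜 : Type*} [RCLike 𝕜] {A : Matrix n n 𝕜}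
    (hA : A.IsHermitian) (i j : n) :
    star ⇑(hA.eigenvectorBasis i) ⬝ᵥ A *ᵥ ⇑(hA.eigenvectorBasis j) =
      if i = j then (hA.eigenvalues j : 𝕜) else 0 := by
  rw [mulVec_eigenvectorBasis, dotProduct_smul, star_eigenvectorBasis_dotProduct]
  split_ifs <;> simp [RCLike.real_smul_eq_coe_mul]

lemma eq_smul_one_of_eigenvalues_eq {𝕜 : Type*} [RCLike 𝕜] {A : Matrix n n 𝕜}
    (hA : A.IsHermitian) {τ : ℝ} (h : ∀ i, hA.eigenvalues i = τ) : A = (τ : 𝕜) • 1 := by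
  have hdiag : diagonal (RCLike.ofReal ∘ hA.eigenvalues) = (τ : 𝕜) • (1 : Matrix n n 𝕜) := by
    rw [smul_one_eq_diagonal]
    congr 1
    ext i
    simp [h i]
  rw [hA.spectral_theorem, hdiag, map_smul, map_one]

lemma compressionInvTrace_eigenvectorBasis {A : Matrix n n ℝ} (hA : A.IsHermitian) {i j : n}
    (hij : i ≠ j) (hi : hA.eigenvalues i ≠ 0) (hj : hA.eigenvalues j ≠ 0) :
    A.compressionInvTrace (hA.eigenvectorBasis i) (hA.eigenvectorBasis j) =
      (hA.eigenvalues i)⁻¹ + (hA.eigenvalues j)⁻¹ := by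
  have hq := hA.star_eigenvectorBasis_dotProduct_mulVec
  simp only [star_trivial, RCLike.ofReal_real_eq_id, id] at hq
  rw [compressionInvTrace, hq, hq, hq, if_pos rfl, if_pos rfl, if_neg hij]
  field_simp
  ring

end IsHermitian

end Matrix

lemma apply_eq_apply_of_add_eq_of_three_le {ι M : Type*} [AddRightCancelSemigroup M]
    {x : ι → M} {c : M} (hι : 3 ≤ ENat.card ι) (hx : ∀ i j, i ≠ j → x i + x j = c) (i j : ι) :
    x i = x j := by
  obtain ⟨k, hki, hkj⟩ := ENat.exists_ne_ne_of_three_le hι i j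
  exact add_right_cancel ((hx i k hki.symm).trans (hx j k hkj.symm).symm)

theorem isotropy_necessity_general (U : Matrix (Fin 3) (Fin 3) ℝ) (hU : U.PosDef)
    (hconst : ∃ c : ℝ, ∀ f g : Fin 3 → ℝ, f ⬝ᵥ f = 1 → g ⬝ᵥ g = 1 → f ⬝ᵥ g = 0 →
      (f ⬝ᵥ U.mulVec f + g ⬝ᵥ U.mulVec g) /
          ((f ⬝ᵥ U.mulVec f) * (g ⬝ᵥ U.mulVec g) - (f ⬝ᵥ U.mulVec g) ^ 2) = c) :
    ∃ τ : ℝ, 0 < τ ∧ U = τ • (1 : Matrix (Fin 3) (Fin 3) ℝ) := by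
  obtain ⟨c, hc⟩ := hconst
  have hU' : U.IsHermitian := hU.isHermitian
  have horth := hU'.star_eigenvectorBasis_dotProduct
  simp only [star_trivial] at horth
  have hsum : ∀ i j, i ≠ j → (hU'.eigenvalues i)⁻¹ + (hU'.eigenvalues j)⁻¹ = c := by
    intro i j hij
    rw [← hU'.compressionInvTrace_eigenvectorBasis hij (hU.eigenvalues_pos i).ne'
      (hU.eigenvalues_pos j).ne']
    exact hc _ _ (by simp [horth]) (by simp [horth]) (by simp [horth, hij])
  have hiso : ∀ i, hU'.eigenvalues i = hU'.eigenvalues 0 := fun i =>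
    inv_injective (apply_eq_apply_of_add_eq_of_three_le (by simp) hsum i 0)
  exact ⟨_, hU.eigenvalues_pos 0, hU'.eq_smul_one_of_eigenvalues_eq hiso⟩

/-- Necessity of isotropy: if `U` is symmetric positive definite and the value
`F(U; f, g) = (fᵀUf + gᵀUg)/((fᵀUf)(gᵀUg) − (fᵀUg)²)` is the same for all
orthonormal pairs `(f, g)` in `ℝ³`, then `U = τ·I₃` for some `τ > 0`
(equivalently, all eigenvalues of `U` coincide). -/
theorem isotropy_necessity (U : Matrix (Fin 3) (Fin 3) ℝ) (hU : U.PosDef)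
    (hUsymm : U.IsSymm)
    (hconst : ∃ c : ℝ, ∀ f g : Fin 3 → ℝ, f ⬝ᵥ f = 1 → g ⬝ᵥ g = 1 → f ⬝ᵥ g = 0 →
      (f ⬝ᵥ U.mulVec f + g ⬝ᵥ U.mulVec g) /
          ((f ⬝ᵥ U.mulVec f) * (g ⬝ᵥ U.mulVec g) - (f ⬝ᵥ U.mulVec g) ^ 2) = c) :
    ∃ τ : ℝ, 0 < τ ∧ U = τ • (1 : Matrix (Fin 3) (Fin 3) ℝ) :=
  isotropy_necessity_general U hU hconst
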